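/- Let T, N, B : ℝ² → ℝ³ be smooth (C^∞) maps of (t,x) that are orthonormal at every point with B = T × N, and let κ, τ : ℝ² → ℝ be smooth with κ(t,x) > 0, satisfying the Serret–Frenet equations ∂_x T = κN, ∂_x N = -κT + τB, ∂_x B = -τN at every (t,x). Suppose the tangent vector evolves as ∂_t T = f̂₁ N + f̂₂ B for smooth functions f̂₁, f̂₂ : ℝ² → ℝ. Then the curvature and torsion evolve according to ∂_t κ = ∂_x f̂₁ - τ f̂₂ and ∂_t τ = ∂_x( κ^{-1}(∂_x f̂₂ + τ f̂₁) ) + κ f̂₂. -/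

import Mathlib

noncomputable section

/-- Euclidean dot product on `ℝ³`. -/
def dot3 (a b : Fin 3 → ℝ) : ℝ := a 0 * b 0 + a 1 * b 1 + a 2 * b 2

/-- Cross product on `ℝ³`. -/
def cross3 (a b : Fin 3 → ℝ) : Fin 3 → ℝ :=
  ![a 1 * b 2 - a 2 * b 1, a 2 * b 0 - a 0 * b 2, a 0 * b 1 - a 1 * b 0]

/-- Partial derivative with respect to the first variable `t`. -/
def pt {E : Type*} [NormedAddCommGroup E] [NormedSpace ℝ E]
    (f : ℝ × ℝ → E) : ℝ × ℝ → E := fun p => deriv (fun s => f (s, p.2)) p.1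

/-- Partial derivative with respect to the second variable `x`. -/
def px {E : Type*} [NormedAddCommGroup E] [NormedSpace ℝ E]
    (f : ℝ × ℝ → E) : ℝ × ℝ → E := fun p => deriv (fun s => f (p.1, s)) p.2

/-! With `κ = T_x · N` and `τ = N_x · B`, differentiate both in `t`, swap `∂_t ∂_x` (Schwarz) and
substitute `T_t = f̂₁ N + f̂₂ B`, the Frenet equations, and the derivatives of the orthonormality
relations (`N · N_t = 0`, `B · B_t = 0`, `T · B_t = -T_t · B`). Dotting `∂_t (κ N) = ∂_x T_t`
with `B` gives `κ N_t · B = ∂_x f̂₂ + τ f̂₁`, which is the term under `∂_x` in the torsion formula.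
-/

section PartialDerivatives

variable {E : Type*} [NormedAddCommGroup E] [NormedSpace ℝ E] {F : ℝ × ℝ → E} {p : ℝ × ℝ}

theorem pt_eq_fderiv (hF : DifferentiableAt ℝ F p) : pt F p = fderiv ℝ F p (1, 0) :=
  (hF.hasFDerivAt.comp_hasDerivAt_of_eq p.1
    ((hasDerivAt_id _).prodMk (hasDerivAt_const _ _)) rfl).deriv

theorem px_eq_fderiv (hF : DifferentiableAt ℝ F p) : px F p = fderiv ℝ F p (0, 1) :=
  (hF.hasFDerivAt.comp_hasDerivAt_of_eq p.2
    ((hasDerivAt_const _ _).prodMk (hasDerivAt_id _)) rfl).deriv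

theorem hasDerivAt_pt (hF : DifferentiableAt ℝ F p) :
    HasDerivAt (fun s => F (s, p.2)) (pt F p) p.1 :=
  (hF.comp (x := p.1) (by fun_prop : DifferentiableAt ℝ (fun s : ℝ => (s, p.2)) p.1)).hasDerivAt

theorem hasDerivAt_px (hF : DifferentiableAt ℝ F p) :
    HasDerivAt (fun s => F (p.1, s)) (px F p) p.2 :=
  (hF.comp (x := p.2) (by fun_prop : DifferentiableAt ℝ (fun s : ℝ => (p.1, s)) p.2)).hasDerivAt

theorem contDiff_pt {m n : WithTop ℕ∞} (hF : ContDiff ℝ n F) (hmn : m + 1 ≤ n) :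
    ContDiff ℝ m (pt F) := by
  have hd : Differentiable ℝ F := (hF.of_le hmn).differentiable (by simp)
  rw [show pt F = fun q => fderiv ℝ F q (1, 0) from funext fun q => pt_eq_fderiv (hd q)]
  exact (hF.fderiv_right hmn).clm_apply contDiff_const

theorem contDiff_px {m n : WithTop ℕ∞} (hF : ContDiff ℝ n F) (hmn : m + 1 ≤ n) :
    ContDiff ℝ m (px F) := by
  have hd : Differentiable ℝ F := (hF.of_le hmn).differentiable (by simp)
  rw [show px F = fun q => fderiv ℝ F q (0, 1) from funext fun q => px_eq_fderiv (hd q)]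
  exact (hF.fderiv_right hmn).clm_apply contDiff_const

theorem differentiable_pt (hF : ContDiff ℝ 2 F) : Differentiable ℝ (pt F) :=
  (contDiff_pt hF (m := 1) (by norm_num)).differentiable one_ne_zero

theorem differentiable_px (hF : ContDiff ℝ 2 F) : Differentiable ℝ (px F) :=
  (contDiff_px hF (m := 1) (by norm_num)).differentiable one_ne_zero

theorem pt_px_comm (hF : ContDiff ℝ 2 F) (p : ℝ × ℝ) : pt (px F) p = px (pt F) p := by
  have hd : Differentiable ℝ F := hF.differentiable (by norm_num)
  have hd' : Differentiable ℝ (fderiv ℝ F) :=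
    (hF.fderiv_right (m := 1) (by norm_num)).differentiable one_ne_zero
  rw [pt_eq_fderiv (differentiable_px hF p),
    px_eq_fderiv (differentiable_pt hF p),
    show px F = fun q => fderiv ℝ F q (0, 1) from funext fun q => px_eq_fderiv (hd q),
    show pt F = fun q => fderiv ℝ F q (1, 0) from funext fun q => pt_eq_fderiv (hd q),
    fderiv_clm_apply (hd' p) (differentiableAt_const _),
    fderiv_clm_apply (hd' p) (differentiableAt_const _)]
  simpa using hF.contDiffAt.isSymmSndFDerivAt (by simp) (1, 0) (0, 1)

end PartialDerivatives

section Dot3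

theorem dot3_comm (a b : Fin 3 → ℝ) : dot3 a b = dot3 b a := by
  simp only [dot3]; ring

theorem dot3_add_left (a b c : Fin 3 → ℝ) : dot3 (a + b) c = dot3 a c + dot3 b c := by
  simp only [dot3, Pi.add_apply]; ring

theorem dot3_smul_left (r : ℝ) (a b : Fin 3 → ℝ) : dot3 (r • a) b = r * dot3 a b := by
  simp only [dot3, Pi.smul_apply, smul_eq_mul]; ring

theorem dot3_smul_right (r : ℝ) (a b : Fin 3 → ℝ) : dot3 a (r • b) = r * dot3 a b := by
  rw [dot3_comm, dot3_smul_left, dot3_comm]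

theorem HasDerivAt.dot3 {u v : ℝ → Fin 3 → ℝ} {u' v' : Fin 3 → ℝ} {s : ℝ}
    (hu : HasDerivAt u u' s) (hv : HasDerivAt v v' s) :
    HasDerivAt (fun r => dot3 (u r) (v r)) (dot3 u' (v s) + dot3 (u s) v') s := by
  have hui := hasDerivAt_pi.mp hu
  have hvi := hasDerivAt_pi.mp hv
  refine ((((hui 0).mul (hvi 0)).add ((hui 1).mul (hvi 1))).add
    ((hui 2).mul (hvi 2))).congr_deriv ?_
  simp only [_root_.dot3]; ring

end Dot3

section ProductRules

variable {E : Type*} [NormedAddCommGroup E] [NormedSpace ℝ E] {F : ℝ × ℝ → E}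
  {U V : ℝ × ℝ → Fin 3 → ℝ} {c : ℝ × ℝ → ℝ} {p : ℝ × ℝ}

theorem pt_dot3 (hU : DifferentiableAt ℝ U p) (hV : DifferentiableAt ℝ V p) :
    pt (fun q => dot3 (U q) (V q)) p = dot3 (pt U p) (V p) + dot3 (U p) (pt V p) :=
  ((hasDerivAt_pt hU).dot3 (hasDerivAt_pt hV)).deriv

theorem px_dot3 (hU : DifferentiableAt ℝ U p) (hV : DifferentiableAt ℝ V p) :
    px (fun q => dot3 (U q) (V q)) p = dot3 (px U p) (V p) + dot3 (U p) (px V p) :=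
  ((hasDerivAt_px hU).dot3 (hasDerivAt_px hV)).deriv

theorem pt_smul (hc : DifferentiableAt ℝ c p) (hF : DifferentiableAt ℝ F p) :
    pt (fun q => c q • F q) p = c p • pt F p + pt c p • F p :=
  ((hasDerivAt_pt hc).smul (hasDerivAt_pt hF)).deriv

theorem dot3_pt_add_dot3_pt_eq_zero {a : ℝ} (hU : DifferentiableAt ℝ U p)
    (hV : DifferentiableAt ℝ V p) (h : ∀ q, dot3 (U q) (V q) = a) :
    dot3 (pt U p) (V p) + dot3 (U p) (pt V p) = 0 := by
  rw [← pt_dot3 hU hV, funext h]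
  exact deriv_const _ _

theorem dot3_pt_self_eq_zero {a : ℝ} (hU : DifferentiableAt ℝ U p)
    (h : ∀ q, dot3 (U q) (U q) = a) :
    dot3 (pt U p) (U p) = 0 := by
  have := dot3_pt_add_dot3_pt_eq_zero hU hU h
  rw [dot3_comm (U p)] at this
  linarith

theorem dot3_px_self_eq_zero {a : ℝ} (hU : DifferentiableAt ℝ U p)
    (h : ∀ q, dot3 (U q) (U q) = a) :
    dot3 (px U p) (U p) = 0 := by
  have := px_dot3 hU hU (p := p)
  rw [funext h, dot3_comm (U p), show px (fun _ => a) p = 0 from deriv_const _ _] at this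
  linarith

end ProductRules

section Frenet

variable {T N B : ℝ × ℝ → Fin 3 → ℝ} {κ τ f₁ f₂ : ℝ × ℝ → ℝ}

theorem px_pt_tangent (hN : Differentiable ℝ N) (hB : Differentiable ℝ B)
    (hf₁ : Differentiable ℝ f₁) (hf₂ : Differentiable ℝ f₂)
    (hTt : ∀ p, pt T p = f₁ p • N p + f₂ p • B p) (p : ℝ × ℝ) :
    px (pt T) p = (f₁ p • px N p + px f₁ p • N p) + (f₂ p • px B p + px f₂ p • B p) := by
  rw [funext hTt]
  exact (((hasDerivAt_px (hf₁ p)).smul (hasDerivAt_px (hN p))).add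
    ((hasDerivAt_px (hf₂ p)).smul (hasDerivAt_px (hB p)))).deriv

theorem pt_curvature (hT : ContDiff ℝ 2 T) (hN : Differentiable ℝ N) (hB : Differentiable ℝ B)
    (hf₁ : Differentiable ℝ f₁) (hf₂ : Differentiable ℝ f₂)
    (hNN : ∀ p, dot3 (N p) (N p) = 1) (hNB : ∀ p, dot3 (N p) (B p) = 0)
    (hTx : ∀ p, px T p = κ p • N p) (hBx : ∀ p, px B p = (-τ p) • N p)
    (hTt : ∀ p, pt T p = f₁ p • N p + f₂ p • B p) (p : ℝ × ℝ) :
    pt κ p = px f₁ p - τ p * f₂ p := by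
  have hκ_eq : κ = fun q => dot3 (px T q) (N q) :=
    funext fun q => by rw [hTx, dot3_smul_left, hNN, mul_one]
  rw [hκ_eq, pt_dot3 (differentiable_px hT p) (hN p), pt_px_comm hT,
    px_pt_tangent hN hB hf₁ hf₂ hTt, hTx, dot3_smul_left, dot3_comm (N p),
    dot3_pt_self_eq_zero (hN p) hNN]
  simp only [dot3_add_left, dot3_smul_left]
  rw [dot3_px_self_eq_zero (hN p) hNN, hNN, hBx, dot3_smul_left, hNN, dot3_comm (B p), hNB]
  ring

theorem torsion_eq_dot3 (hTB : ∀ p, dot3 (T p) (B p) = 0) (hBB : ∀ p, dot3 (B p) (B p) = 1)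
    (hNx : ∀ p, px N p = (-κ p) • T p + τ p • B p) : τ = fun p => dot3 (px N p) (B p) :=
  funext fun p => by rw [hNx, dot3_add_left, dot3_smul_left, dot3_smul_left, hTB, hBB]; ring

theorem curvature_mul_dot3_pt_normal_binormal (hT : ContDiff ℝ 2 T) (hN : Differentiable ℝ N)
    (hB : Differentiable ℝ B) (hκ : Differentiable ℝ κ) (hf₁ : Differentiable ℝ f₁)
    (hf₂ : Differentiable ℝ f₂) (hBB : ∀ p, dot3 (B p) (B p) = 1)
    (hNB : ∀ p, dot3 (N p) (B p) = 0) (hTB : ∀ p, dot3 (T p) (B p) = 0)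
    (hTx : ∀ p, px T p = κ p • N p) (hNx : ∀ p, px N p = (-κ p) • T p + τ p • B p)
    (hBx : ∀ p, px B p = (-τ p) • N p) (hTt : ∀ p, pt T p = f₁ p • N p + f₂ p • B p)
    (p : ℝ × ℝ) :
    κ p * dot3 (pt N p) (B p) = px f₂ p + τ p * f₁ p := by
  have hTxt := congrArg (dot3 · (B p)) (pt_px_comm hT p)
  rw [funext hTx, pt_smul (hκ p) (hN p), px_pt_tangent hN hB hf₁ hf₂ hTt] at hTxt
  simp only [dot3_add_left, dot3_smul_left] at hTxt
  rw [← congrFun (torsion_eq_dot3 hTB hBB hNx), hBx, dot3_smul_left, hNB, hBB] at hTxt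
  linear_combination hTxt

theorem pt_torsion (hT : ContDiff ℝ 2 T) (hN : ContDiff ℝ 2 N) (hB : Differentiable ℝ B)
    (hκ : Differentiable ℝ κ) (hf₁ : Differentiable ℝ f₁) (hf₂ : Differentiable ℝ f₂)
    (hκ₀ : ∀ p, κ p ≠ 0) (hNN : ∀ p, dot3 (N p) (N p) = 1) (hBB : ∀ p, dot3 (B p) (B p) = 1)
    (hNB : ∀ p, dot3 (N p) (B p) = 0) (hTB : ∀ p, dot3 (T p) (B p) = 0)
    (hTx : ∀ p, px T p = κ p • N p) (hNx : ∀ p, px N p = (-κ p) • T p + τ p • B p)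
    (hBx : ∀ p, px B p = (-τ p) • N p) (hTt : ∀ p, pt T p = f₁ p • N p + f₂ p • B p)
    (p : ℝ × ℝ) :
    pt τ p = px (fun q => (κ q)⁻¹ * (px f₂ q + τ q * f₁ q)) p + κ p * f₂ p := by
  have hN₁ : Differentiable ℝ N := hN.differentiable two_ne_zero
  have hT₁ : Differentiable ℝ T := hT.differentiable two_ne_zero
  have hNB_t : (fun q => (κ q)⁻¹ * (px f₂ q + τ q * f₁ q)) = fun q => dot3 (pt N q) (B q) :=
    funext fun q => by
      rw [← curvature_mul_dot3_pt_normal_binormal hT hN₁ hB hκ hf₁ hf₂ hBB hNB hTB hTx hNx hBx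
        hTt, inv_mul_cancel_left₀ (hκ₀ q)]
  have hTB_t : dot3 (T p) (pt B p) = -f₂ p := by
    have := dot3_pt_add_dot3_pt_eq_zero (hT₁ p) (hB p) hTB
    rw [hTt, dot3_add_left, dot3_smul_left, dot3_smul_left, hNB, hBB] at this
    linarith
  have hNtBx : dot3 (pt N p) (px B p) = 0 := by
    rw [hBx, dot3_smul_right, dot3_pt_self_eq_zero (hN₁ p) hNN, mul_zero]
  rw [hNB_t, torsion_eq_dot3 hTB hBB hNx, pt_dot3 (differentiable_px hN p) (hB p),
    pt_px_comm hN, px_dot3 (differentiable_pt hN p) (hB p), hNtBx, hNx, dot3_add_left,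
    dot3_smul_left, dot3_smul_left, hTB_t, dot3_comm (B p),
    dot3_pt_self_eq_zero (hB p) hBB]
  ring

end Frenet

theorem frenet_curvature_torsion_evolution_general
    (T N B : ℝ × ℝ → Fin 3 → ℝ) (κ τ f₁ f₂ : ℝ × ℝ → ℝ)
    (hT : ContDiff ℝ (⊤ : ℕ∞) T) (hN : ContDiff ℝ (⊤ : ℕ∞) N)
    (hB : ContDiff ℝ (⊤ : ℕ∞) B)
    (hκ : ContDiff ℝ (⊤ : ℕ∞) κ)
    (hf₁ : ContDiff ℝ (⊤ : ℕ∞) f₁) (hf₂ : ContDiff ℝ (⊤ : ℕ∞) f₂)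
    (horthNN : ∀ p, dot3 (N p) (N p) = 1)
    (horthBB : ∀ p, dot3 (B p) (B p) = 1)
    (horthTB : ∀ p, dot3 (T p) (B p) = 0)
    (horthNB : ∀ p, dot3 (N p) (B p) = 0)
    (hκpos : ∀ p, 0 < κ p)
    (hTx : ∀ p, px T p = κ p • N p)
    (hNx : ∀ p, px N p = (-κ p) • T p + τ p • B p)
    (hBx : ∀ p, px B p = (-τ p) • N p)
    (hTt : ∀ p, pt T p = f₁ p • N p + f₂ p • B p) :
    (∀ p, pt κ p = px f₁ p - τ p * f₂ p) ∧
    (∀ p, pt τ p = px (fun q => (κ q)⁻¹ * (px f₂ q + τ q * f₁ q)) p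
        + κ p * f₂ p) := by
  have hT₂ : ContDiff ℝ 2 T := hT.of_le (WithTop.coe_le_coe.mpr le_top)
  have hN₂ : ContDiff ℝ 2 N := hN.of_le (WithTop.coe_le_coe.mpr le_top)
  have hN₁ : Differentiable ℝ N := hN.differentiable (by simp)
  have hB₁ : Differentiable ℝ B := hB.differentiable (by simp)
  have hf₁₁ : Differentiable ℝ f₁ := hf₁.differentiable (by simp)
  have hf₂₁ : Differentiable ℝ f₂ := hf₂.differentiable (by simp)
  exact ⟨pt_curvature hT₂ hN₁ hB₁ hf₁₁ hf₂₁ horthNN horthNB hTx hBx hTt,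
    pt_torsion hT₂ hN₂ hB₁ (hκ.differentiable (by simp)) hf₁₁ hf₂₁ (fun p => (hκpos p).ne')
      horthNN horthBB horthNB horthTB hTx hNx hBx hTt⟩

/-- For a moving Frenet frame evolving as `T_t = f̂₁ N + f̂₂ B`, the curvature and
torsion evolve by `κ_t = ∂_x f̂₁ - τ f̂₂` and `τ_t = ∂_x(κ⁻¹(∂_x f̂₂ + τ f̂₁)) + κ f̂₂`. -/
theorem frenet_curvature_torsion_evolution
    (T N B : ℝ × ℝ → Fin 3 → ℝ) (κ τ f₁ f₂ : ℝ × ℝ → ℝ)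
    (hT : ContDiff ℝ (⊤ : ℕ∞) T) (hN : ContDiff ℝ (⊤ : ℕ∞) N)
    (hB : ContDiff ℝ (⊤ : ℕ∞) B)
    (hκ : ContDiff ℝ (⊤ : ℕ∞) κ) (hτ : ContDiff ℝ (⊤ : ℕ∞) τ)
    (hf₁ : ContDiff ℝ (⊤ : ℕ∞) f₁) (hf₂ : ContDiff ℝ (⊤ : ℕ∞) f₂)
    (horthTT : ∀ p, dot3 (T p) (T p) = 1)
    (horthNN : ∀ p, dot3 (N p) (N p) = 1)
    (horthBB : ∀ p, dot3 (B p) (B p) = 1)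
    (horthTN : ∀ p, dot3 (T p) (N p) = 0)
    (horthTB : ∀ p, dot3 (T p) (B p) = 0)
    (horthNB : ∀ p, dot3 (N p) (B p) = 0)
    (hBTN : ∀ p, B p = cross3 (T p) (N p))
    (hκpos : ∀ p, 0 < κ p)
    (hTx : ∀ p, px T p = κ p • N p)
    (hNx : ∀ p, px N p = (-κ p) • T p + τ p • B p)
    (hBx : ∀ p, px B p = (-τ p) • N p)
    (hTt : ∀ p, pt T p = f₁ p • N p + f₂ p • B p) :
    (∀ p, pt κ p = px f₁ p - τ p * f₂ p) ∧
    (∀ p, pt τ p = px (fun q => (κ q)⁻¹ * (px f₂ q + τ q * f₁ q)) p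
        + κ p * f₂ p) :=
  frenet_curvature_torsion_evolution_general T N B κ τ f₁ f₂ hT hN hB hκ hf₁ hf₂ horthNN horthBB
    horthTB horthNB hκpos hTx hNx hBx hTt
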